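/- Suppose a discrete-time system x(k+1) = φ(x(k), u(k)) with φ(0,0) = 0 admits, for every state x₀ with ‖x₀‖ ≤ R, a control sequence u(0),…,u(N-1) such that the resulting trajectory satisfies ∑_{j=1}^{N} (‖x(j)‖² + ‖u(j-1)‖²) ≤ σ‖x₀‖² and ‖x(N)‖² ≤ β‖x₀‖², with 0 ≤ β < 1 and σ ≥ 0. Then by concatenating such N-step controls, there exists an infinite control sequence from any ‖x(0)‖ ≤ R whose total cost ∑_{j=1}^{∞} (‖x(j)‖² + ‖u(j-1)‖²) is at most (σ/(1-β))‖x(0)‖². -/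

import Mathlib

/-!
Apply the given `N`-step control from the current block state, then restart from the state it
reaches. The contraction `‖x(N)‖² ≤ β ‖x₀‖²` keeps every block state in the ball and makes the
`i`-th block state have squared norm at most `βⁱ ‖x₀‖²`, so the `i`-th block costs at most
`σ βⁱ ‖x₀‖²`; summing the geometric series gives the bound `σ / (1 - β) ‖x₀‖²`.
-/

/-- The trajectory of the system x(k+1) = φ(x(k), u(k)). -/
def traj {α γ : Type*} (φ : α → γ → α) (x₀ : α) (u : ℕ → γ) : ℕ → α
  | 0 => x₀
  | k + 1 => φ (traj φ x₀ u k) (u k)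

open Finset

section Concatenation

variable {α γ : Type*} (φ : α → γ → α)

theorem traj_add (x₀ : α) (u : ℕ → γ) (k r : ℕ) :
    traj φ x₀ u (k + r) = traj φ (traj φ x₀ u k) (fun j => u (k + j)) r := by
  induction r with
  | zero => rfl
  | succ r ih => exact congrArg (φ · (u (k + r))) ih

theorem traj_congr {x₀ : α} {u v : ℕ → γ} {r : ℕ} (h : ∀ j < r, u j = v j) :
    traj φ x₀ u r = traj φ x₀ v r := by
  induction r with
  | zero => rfl
  | succ r ih =>
    simp only [traj, ih fun j hj => h j (by omega), h r (by omega)]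

variable (N : ℕ) (V : α → ℕ → γ) (x₀ : α)

def blockState : ℕ → α
  | 0 => x₀
  | i + 1 => traj φ (blockState i) (V (blockState i)) N

def concatControl (k : ℕ) : γ :=
  V (blockState φ N V x₀ (k / N)) (k % N)

variable {φ N V x₀}

theorem concatControl_block {i r : ℕ} (hr : r < N) :
    concatControl φ N V x₀ (i * N + r) = V (blockState φ N V x₀ i) r := by
  have hN : 0 < N := by omega
  simp only [concatControl, Nat.add_comm (i * N), Nat.add_mul_div_right _ _ hN,
    Nat.add_mul_mod_self_right, Nat.div_eq_of_lt hr, Nat.mod_eq_of_lt hr, Nat.zero_add]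

theorem traj_shift_concatControl {i r : ℕ} (hr : r ≤ N) :
    traj φ (blockState φ N V x₀ i) (fun j => concatControl φ N V x₀ (i * N + j)) r =
      traj φ (blockState φ N V x₀ i) (V (blockState φ N V x₀ i)) r :=
  traj_congr φ fun _ hj => concatControl_block (by omega)

theorem traj_concatControl_mul (i : ℕ) :
    traj φ x₀ (concatControl φ N V x₀) (i * N) = blockState φ N V x₀ i := by
  induction i with
  | zero => rw [Nat.zero_mul]; rfl
  | succ i ih => rw [Nat.succ_mul, traj_add, ih, traj_shift_concatControl le_rfl]; rfl

theorem traj_concatControl_block {i r : ℕ} (hr : r ≤ N) :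
    traj φ x₀ (concatControl φ N V x₀) (i * N + r) =
      traj φ (blockState φ N V x₀ i) (V (blockState φ N V x₀ i)) r := by
  rw [traj_add, traj_concatControl_mul, traj_shift_concatControl hr]

end Concatenation

section Cost

variable {E F : Type*} [SeminormedAddGroup E] [SeminormedAddGroup F] {φ : E → F → E}

def stageCost (φ : E → F → E) (x₀ : E) (u : ℕ → F) (j : ℕ) : ℝ :=
  ‖traj φ x₀ u (j + 1)‖ ^ 2 + ‖u j‖ ^ 2

theorem stageCost_nonneg (x₀ : E) (u : ℕ → F) (j : ℕ) : 0 ≤ stageCost φ x₀ u j := by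
  unfold stageCost; positivity

theorem sum_Icc_eq_sum_range_stageCost (x₀ : E) (u : ℕ → F) (N : ℕ) :
    ∑ j ∈ Icc 1 N, (‖traj φ x₀ u j‖ ^ 2 + ‖u (j - 1)‖ ^ 2) = ∑ j ∈ range N, stageCost φ x₀ u j := by
  induction N with
  | zero => rfl
  | succ N ih => rw [sum_Icc_succ_top (by omega), ih, sum_range_succ]; rfl

theorem stageCost_concatControl_block {N : ℕ} {V : E → ℕ → F} {x₀ : E} {i r : ℕ} (hr : r < N) :
    stageCost φ x₀ (concatControl φ N V x₀) (i * N + r) =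
      stageCost φ (blockState φ N V x₀ i) (V (blockState φ N V x₀ i)) r := by
  rw [stageCost, stageCost, concatControl_block hr, ← traj_concatControl_block hr]
  rfl

end Cost

section Contraction

variable {E γ : Type*} [SeminormedAddGroup E] {φ : E → γ → E} {N : ℕ} {V : E → ℕ → γ}
  {x₀ : E} {β R : ℝ}
  (hV : ∀ x, ‖x‖ ≤ R → ‖traj φ x (V x) N‖ ^ 2 ≤ β * ‖x‖ ^ 2)
include hV

theorem norm_blockState_le (hβ : β ≤ 1) (hx₀ : ‖x₀‖ ≤ R) (i : ℕ) :
    ‖blockState φ N V x₀ i‖ ≤ R := by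
  induction i with
  | zero => exact hx₀
  | succ i ih =>
    refine le_trans ?_ ih
    refine (pow_le_pow_iff_left₀ (norm_nonneg _) (norm_nonneg _) two_ne_zero).mp ?_
    calc ‖blockState φ N V x₀ (i + 1)‖ ^ 2 ≤ β * ‖blockState φ N V x₀ i‖ ^ 2 := hV _ ih
      _ ≤ ‖blockState φ N V x₀ i‖ ^ 2 := mul_le_of_le_one_left (by positivity) hβ

theorem norm_blockState_sq_le (hβ0 : 0 ≤ β) (hβ1 : β ≤ 1) (hx₀ : ‖x₀‖ ≤ R) (i : ℕ) :
    ‖blockState φ N V x₀ i‖ ^ 2 ≤ β ^ i * ‖x₀‖ ^ 2 := by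
  induction i with
  | zero => simp [blockState]
  | succ i ih =>
    calc ‖blockState φ N V x₀ (i + 1)‖ ^ 2
        ≤ β * ‖blockState φ N V x₀ i‖ ^ 2 := hV _ (norm_blockState_le hV hβ1 hx₀ i)
      _ ≤ β * (β ^ i * ‖x₀‖ ^ 2) := mul_le_mul_of_nonneg_left ih hβ0
      _ = β ^ (i + 1) * ‖x₀‖ ^ 2 := by ring

end Contraction

theorem sum_range_mul_eq_sum_sum {M : Type*} [AddCommMonoid M] (f : ℕ → M) (K N : ℕ) :
    ∑ j ∈ range (K * N), f j = ∑ i ∈ range K, ∑ r ∈ range N, f (i * N + r) := by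
  induction K with
  | zero => simp
  | succ K ih => rw [Nat.succ_mul, sum_range_add, ih, sum_range_succ]

theorem summable_and_tsum_le_of_block_sum_le {f : ℕ → ℝ} (hf : ∀ j, 0 ≤ f j) {N : ℕ}
    (hN : 1 ≤ N) {c β : ℝ} (hc : 0 ≤ c) (hβ0 : 0 ≤ β) (hβ1 : β < 1)
    (hblock : ∀ i, ∑ r ∈ range N, f (i * N + r) ≤ c * β ^ i) :
    Summable f ∧ ∑' j, f j ≤ c / (1 - β) := by
  have hbound : ∀ M, ∑ j ∈ range M, f j ≤ c / (1 - β) := fun M =>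
    calc ∑ j ∈ range M, f j
        ≤ ∑ j ∈ range (M * N), f j :=
          sum_le_sum_of_subset_of_nonneg (range_subset_range.mpr (Nat.le_mul_of_pos_right M hN))
            fun j _ _ => hf j
      _ ≤ ∑ i ∈ range M, c * β ^ i := by rw [sum_range_mul_eq_sum_sum]; exact sum_le_sum fun i _ => hblock i
      _ ≤ c / (1 - β) := by
          have hgeom := geom_sum_Ico_le_of_lt_one (m := 0) (n := M) hβ0 hβ1
          rw [Nat.Ico_zero_eq_range, pow_zero] at hgeom
          rw [← mul_sum, div_eq_mul_one_div]
          exact mul_le_mul_of_nonneg_left hgeom hc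
  exact ⟨summable_of_sum_range_le hf hbound, Real.tsum_le_of_sum_range_le hf hbound⟩

theorem stmt13_general (n m N : ℕ) (hN : 1 ≤ N)
    (φ : EuclideanSpace ℝ (Fin n) → EuclideanSpace ℝ (Fin m) → EuclideanSpace ℝ (Fin n))
    (β σ R : ℝ) (h0 : 0 ≤ β) (h1 : β < 1) (hσ : 0 ≤ σ)
    (hstab : ∀ x₀ : EuclideanSpace ℝ (Fin n), ‖x₀‖ ≤ R →
      ∃ u : ℕ → EuclideanSpace ℝ (Fin m),
        (∑ j ∈ Finset.Icc 1 N, (‖traj φ x₀ u j‖ ^ 2 + ‖u (j - 1)‖ ^ 2)) ≤ σ * ‖x₀‖ ^ 2 ∧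
        ‖traj φ x₀ u N‖ ^ 2 ≤ β * ‖x₀‖ ^ 2) :
    ∀ x₀ : EuclideanSpace ℝ (Fin n), ‖x₀‖ ≤ R →
      ∃ u : ℕ → EuclideanSpace ℝ (Fin m),
        Summable (fun j : ℕ => ‖traj φ x₀ u (j + 1)‖ ^ 2 + ‖u j‖ ^ 2) ∧
        (∑' j : ℕ, (‖traj φ x₀ u (j + 1)‖ ^ 2 + ‖u j‖ ^ 2)) ≤ σ / (1 - β) * ‖x₀‖ ^ 2 := by
  intro x₀ hx₀
  choose! V hV_cost hV_contr using hstab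
  simp only [sum_Icc_eq_sum_range_stageCost] at hV_cost
  have hblock (i : ℕ) : ∑ r ∈ range N, stageCost φ x₀ (concatControl φ N V x₀) (i * N + r)
      ≤ σ * ‖x₀‖ ^ 2 * β ^ i := by
    have hY := norm_blockState_le hV_contr h1.le hx₀ i
    calc ∑ r ∈ range N, stageCost φ x₀ (concatControl φ N V x₀) (i * N + r)
        = ∑ r ∈ range N, stageCost φ (blockState φ N V x₀ i) (V (blockState φ N V x₀ i)) r :=
          sum_congr rfl fun r hr => stageCost_concatControl_block (mem_range.mp hr)
      _ ≤ σ * ‖blockState φ N V x₀ i‖ ^ 2 := hV_cost _ hY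
      _ ≤ σ * (β ^ i * ‖x₀‖ ^ 2) :=
          mul_le_mul_of_nonneg_left (norm_blockState_sq_le hV_contr h0 h1.le hx₀ i) hσ
      _ = σ * ‖x₀‖ ^ 2 * β ^ i := by ring
  rw [div_mul_eq_mul_div]
  exact ⟨concatControl φ N V x₀, summable_and_tsum_le_of_block_sum_le (stageCost_nonneg x₀ _) hN
    (by positivity) h0 h1 hblock⟩

theorem stmt13 (n m N : ℕ) (hN : 1 ≤ N)
    (φ : EuclideanSpace ℝ (Fin n) → EuclideanSpace ℝ (Fin m) → EuclideanSpace ℝ (Fin n))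
    (hφ0 : φ 0 0 = 0) (β σ R : ℝ) (h0 : 0 ≤ β) (h1 : β < 1) (hσ : 0 ≤ σ)
    (hstab : ∀ x₀ : EuclideanSpace ℝ (Fin n), ‖x₀‖ ≤ R →
      ∃ u : ℕ → EuclideanSpace ℝ (Fin m),
        (∑ j ∈ Finset.Icc 1 N, (‖traj φ x₀ u j‖ ^ 2 + ‖u (j - 1)‖ ^ 2)) ≤ σ * ‖x₀‖ ^ 2 ∧
        ‖traj φ x₀ u N‖ ^ 2 ≤ β * ‖x₀‖ ^ 2) :
    ∀ x₀ : EuclideanSpace ℝ (Fin n), ‖x₀‖ ≤ R →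
      ∃ u : ℕ → EuclideanSpace ℝ (Fin m),
        Summable (fun j : ℕ => ‖traj φ x₀ u (j + 1)‖ ^ 2 + ‖u j‖ ^ 2) ∧
        (∑' j : ℕ, (‖traj φ x₀ u (j + 1)‖ ^ 2 + ‖u j‖ ^ 2)) ≤ σ / (1 - β) * ‖x₀‖ ^ 2 :=
  stmt13_general n m N hN φ β σ R h0 h1 hσ hstab
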